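/- arXiv:1811.10110 — 2 statements merged into one kernel-verified Lean document; each statement's English description precedes it below -/
import Mathlib

section
/- Let d ≥ 2, Σ a d×d positive definite real matrix, and α, μ ∈ ℝ^d with all components positive. Define g(t) = (1/t)·inf_{x ≥ α+μt} xᵀΣ⁻¹x for t > 0 (and g(0) = ∞). Then g is convex on (0,∞) and attains its unique minimum over [0,∞) at a point t₀ > 0; moreover, if I denotes the essential index set of the quadratic programming problem P_Σ(b) with b = α + μt₀, then t₀ = sqrt( (α_Iᵀ Σ_{II}⁻¹ α_I) / (μ_Iᵀ Σ_{II}⁻¹ μ_I) ) and inf_{t ≥ 0} g(t) = g(t₀) = (1/t₀)·b_Iᵀ Σ_{II}⁻¹ b_I. -/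
open MeasureTheory ProbabilityTheory Filter Asymptotics Matrix
open scoped ENNReal NNReal

noncomputable section

variable {Ω : Type*} [MeasureSpace Ω]

/-- `W` is a standard one-dimensional Brownian motion started at `0`:
continuous paths, `W 0 = 0`, Gaussian increments `W t - W s ∼ N(0, t-s)`,
and independent increments. -/
def IsStdBM (W : ℝ → Ω → ℝ) : Prop :=
  (∀ ω, W 0 ω = 0) ∧
  (∀ ω, Continuous fun t => W t ω) ∧
  (∀ t, Measurable (W t)) ∧
  (∀ s t : ℝ, 0 ≤ s → s ≤ t →
    Measure.map (fun ω => W t ω - W s ω) volume = gaussianReal 0 (Real.toNNReal (t - s))) ∧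
  (∀ n : ℕ, ∀ t : ℕ → ℝ, Monotone t → 0 ≤ t 0 →
    iIndepFun
      (fun (k : Fin n) ω => W (t (k + 1)) ω - W (t k) ω) volume)

/-- `B` is a standard `d`-dimensional Brownian motion with independent coordinates. -/
def IsStdBMd (d : ℕ) (B : ℝ → Ω → Fin d → ℝ) : Prop :=
  (∀ i : Fin d, IsStdBM fun t ω => B t ω i) ∧
  iIndepFun (fun (i : Fin d) ω => fun t => B t ω i) volume

/-- The quadratic form `x ↦ xᵀ M x`. -/
def qf {d : ℕ} (M : Matrix (Fin d) (Fin d) ℝ) (x : Fin d → ℝ) : ℝ := x ⬝ᵥ M.mulVec x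

/-- The sub-block `M_{I J}` of a matrix. -/
def sub {d : ℕ} (M : Matrix (Fin d) (Fin d) ℝ) (I J : Finset (Fin d)) : Matrix ↥I ↥J ℝ :=
  M.submatrix Subtype.val Subtype.val

/-- The subvector `b_I`. -/
def subv {d : ℕ} (b : Fin d → ℝ) (I : Finset (Fin d)) : ↥I → ℝ := fun i => b i

/-- The vector `M_{II}⁻¹ b_I`. -/
def wvec {d : ℕ} (M : Matrix (Fin d) (Fin d) ℝ) (I : Finset (Fin d)) (b : Fin d → ℝ) : ↥I → ℝ :=
  (sub M I I)⁻¹.mulVec (subv b I)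

/-- The scalar `b_Iᵀ M_{II}⁻¹ b_I`. -/
def subQF {d : ℕ} (M : Matrix (Fin d) (Fin d) ℝ) (I : Finset (Fin d)) (b : Fin d → ℝ) : ℝ :=
  subv b I ⬝ᵥ wvec M I b

/-- The `j`-th entry of `M_{•I} M_{II}⁻¹ b_I`. -/
def rowdot {d : ℕ} (M : Matrix (Fin d) (Fin d) ℝ) (I : Finset (Fin d)) (b : Fin d → ℝ)
    (j : Fin d) : ℝ := ∑ i : ↥I, M j i * wvec M I b i

/-- The Schur-complement block `D_{KK} = M_{KK} - M_{KI} M_{II}⁻¹ M_{IK}`. -/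
def Dmat {d : ℕ} (M : Matrix (Fin d) (Fin d) ℝ) (I K : Finset (Fin d)) : Matrix ↥K ↥K ℝ :=
  sub M K K - sub M K I * (sub M I I)⁻¹ * sub M I K

/-- `g(t) = (1/t) · inf_{x ≥ α + μ t} xᵀ M⁻¹ x`. -/
def gfun {d : ℕ} (M : Matrix (Fin d) (Fin d) ℝ) (αv μv : Fin d → ℝ) (t : ℝ) : ℝ :=
  (1 / t) * sInf ((fun x => qf M⁻¹ x) '' {x | ∀ i, αv i + μv i * t ≤ x i})

/-- `x` solves the quadratic programming problem `P_M(b)`: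
it minimises `yᵀ M⁻¹ y` over `{y : y ≥ b}` (componentwise). -/
def Minimizes {d : ℕ} (M : Matrix (Fin d) (Fin d) ℝ) (b x : Fin d → ℝ) : Prop :=
  b ≤ x ∧ ∀ y, b ≤ y → qf M⁻¹ x ≤ qf M⁻¹ y

/-- `I` is the essential index set of `P_M(b)` with solution `btil`. -/
def EssIdx {d : ℕ} (M : Matrix (Fin d) (Fin d) ℝ) (b btil : Fin d → ℝ)
    (I : Finset (Fin d)) : Prop :=
  I.Nonempty ∧
  (∀ i ∈ I, btil i = b i) ∧
  (∃ i ∈ I, b i ≠ 0) ∧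
  (∀ i : ↥I, 0 < wvec M I b i) ∧
  (∀ j, j ∉ I → btil j = rowdot M I b j) ∧
  (∀ j, j ∉ I → b j ≤ btil j)

/-- Sojourn time (Lebesgue measure) of `{s ∈ [0,t] : X s - μ s > c}` (componentwise). -/
def soj {d : ℕ} (X : ℝ → Ω → Fin d → ℝ) (μv c : Fin d → ℝ) (t : ℝ) (ω : Ω) : ℝ≥0∞ :=
  volume {s : ℝ | 0 ≤ s ∧ s ≤ t ∧ ∀ i, c i < X s ω i - μv i * s}

/-- Total sojourn time of `{s ≥ 0 : X s - μ s > c}` (componentwise). -/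
def sojInf {d : ℕ} (X : ℝ → Ω → Fin d → ℝ) (μv c : Fin d → ℝ) (ω : Ω) : ℝ≥0∞ :=
  volume {s : ℝ | 0 ≤ s ∧ ∀ i, c i < X s ω i - μv i * s}

/-- The cumulative Parisian ruin time at level `r` with (vector) initial capital `c`,
valued in `ℝ≥0∞` (equal to `∞` if ruin never occurs):
`τ = inf {t > 0 : ∫₀ᵗ 1(X(s) - μ s > c) ds > r}`. -/
def tauCPR {d : ℕ} (X : ℝ → Ω → Fin d → ℝ) (μv c : Fin d → ℝ) (r : ℝ) (ω : Ω) : ℝ≥0∞ :=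
  sInf {s : ℝ≥0∞ | ∃ t : ℝ, 0 < t ∧ s = ENNReal.ofReal t ∧ ENNReal.ofReal r < soj X μv c t ω}

/-- Sojourn time of the `I`-coordinates of `X(t) - μ t` above the level `x`. -/
def sojI {d : ℕ} (X : ℝ → Ω → Fin d → ℝ) (μv : Fin d → ℝ) (I : Finset (Fin d))
    (x : ↥I → ℝ) (T : ℝ) (ω : Ω) : ℝ≥0∞ :=
  volume {t : ℝ | 0 ≤ t ∧ t ≤ T ∧ ∀ i : ↥I, x i < X t ω i - μv i * t}

/-- `H_I(r,T)` as an extended-real (Lebesgue) integral over `ℝ^I`. -/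
def HIL {d : ℕ} (X : ℝ → Ω → Fin d → ℝ) (μv : Fin d → ℝ) (M : Matrix (Fin d) (Fin d) ℝ)
    (I : Finset (Fin d)) (b : Fin d → ℝ) (t₀ r T : ℝ) : ℝ≥0∞ :=
  ∫⁻ x : ↥I → ℝ, ENNReal.ofReal (Real.exp ((1 / t₀) * (x ⬝ᵥ wvec M I b))) *
    volume {ω | ENNReal.ofReal r < sojI X μv I x T ω}

/-- `H_I(r,T) = ∫_{ℝ^I} exp((1/t₀) x_Iᵀ Σ_{II}⁻¹ b_I) P(∫₀ᵀ 1((X(t)-μt)_I > x_I) dt > r) dx_I`. -/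
def HIrT {d : ℕ} (X : ℝ → Ω → Fin d → ℝ) (μv : Fin d → ℝ) (M : Matrix (Fin d) (Fin d) ℝ)
    (I : Finset (Fin d)) (b : Fin d → ℝ) (t₀ r T : ℝ) : ℝ :=
  (HIL X μv M I b t₀ r T).toReal

/-- `ν` is a centered Gaussian distribution on `k → ℝ` with covariance matrix `D`. -/
def IsCenteredGaussianCov {k : Type*} [Fintype k] (ν : Measure (k → ℝ))
    (D : Matrix k k ℝ) : Prop :=
  IsProbabilityMeasure ν ∧
  ∀ l : k → ℝ, Measure.map (fun y => l ⬝ᵥ y) ν = gaussianReal 0 (Real.toNNReal (l ⬝ᵥ D.mulVec l))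

/-- `ψ(x) = P(Y > c·x)` for `Y ∼ ν` (componentwise; equals `1` if the index type is empty,
which corresponds to the case `K = ∅`). -/
def psiFun {k : Type*} [Fintype k] (ν : Measure (k → ℝ)) (c : k → ℝ) (x : ℝ) : ℝ :=
  (ν {y | ∀ j, c j * x < y j}).toReal

/-- The vector `t₀^{-1/2} (μ_K - Σ_{KI} Σ_{II}⁻¹ μ_I)` appearing in `ψ`. -/
def cvec {d : ℕ} (M : Matrix (Fin d) (Fin d) ℝ) (I K : Finset (Fin d)) (μv : Fin d → ℝ)
    (t₀ : ℝ) : ↥K → ℝ :=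
  fun j => (1 / Real.sqrt t₀) * (μv j - rowdot M I μv j)


/-! With `q(x) = xᵀΣ⁻¹x`, the perspective `(x, t) ↦ q(x) / t` is jointly convex on
`ℝ^d × (0, ∞)` and the constraint `x ≥ α + μ t` is jointly linear, so minimising out `x` leaves
a convex function `g`. Coercivity of `q` makes `g` blow up at `0` and at `∞`, so it has a
minimiser; at the midpoint of two minimisers the convexity defect of the perspective must vanish,
which makes their quadratic-programming solutions proportional to the same vector and pins the
two points together.

At a minimiser `t₀` with solution `b̃` of `P_Σ(α + μ t₀)`, every `b̃ + (t - t₀) μ` is feasible for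
`P_Σ(α + μ t)`, so the first-order condition `q(b̃) = 2 t₀ μᵀΣ⁻¹b̃` holds. On the essential index
set, `Σ⁻¹b̃` is `Σ_{II}⁻¹b_I` extended by zero, and the condition becomes
`α_IᵀΣ_{II}⁻¹α_I = t₀² μ_IᵀΣ_{II}⁻¹μ_I`. -/

open Set Topology

section QuadraticForm

variable {d : ℕ}

lemma dotProduct_mulVec_comm_of_isHermitian {ι : Type*} [Fintype ι] {A : Matrix ι ι ℝ}
    (hA : A.IsHermitian) (x y : ι → ℝ) : x ⬝ᵥ A *ᵥ y = y ⬝ᵥ A *ᵥ x := by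
  rw [dotProduct_mulVec, ← mulVec_transpose, ← conjTranspose_eq_transpose_of_trivial, hA,
    dotProduct_comm]

lemma qf_pos {M : Matrix (Fin d) (Fin d) ℝ} (hM : M.PosDef) {x : Fin d → ℝ} (hx : x ≠ 0) :
    0 < qf M x := by
  simpa [qf] using hM.dotProduct_mulVec_pos hx

lemma qf_nonneg {M : Matrix (Fin d) (Fin d) ℝ} (hM : M.PosSemidef) (x : Fin d → ℝ) :
    0 ≤ qf M x := by
  simpa [qf] using hM.dotProduct_mulVec_nonneg x

lemma continuous_qf (M : Matrix (Fin d) (Fin d) ℝ) : Continuous (qf M) := by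
  unfold qf
  fun_prop

lemma qf_smul_add_smul (M : Matrix (Fin d) (Fin d) ℝ) (a b : ℝ) (u v : Fin d → ℝ) :
    qf M (a • u + b • v) =
      a ^ 2 * qf M u + a * b * (u ⬝ᵥ M *ᵥ v + v ⬝ᵥ M *ᵥ u) + b ^ 2 * qf M v := by
  simp only [qf, mulVec_add, mulVec_smul, dotProduct_add, add_dotProduct, dotProduct_smul,
    smul_dotProduct, smul_eq_mul]
  ring

lemma qf_smul (M : Matrix (Fin d) (Fin d) ℝ) (a : ℝ) (u : Fin d → ℝ) :
    qf M (a • u) = a ^ 2 * qf M u := by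
  simpa using qf_smul_add_smul M a 0 u 0

lemma qf_perspective (M : Matrix (Fin d) (Fin d) ℝ) {a b t₁ t₂ : ℝ} (ht₁ : t₁ ≠ 0)
    (ht₂ : t₂ ≠ 0) (ht : a * t₁ + b * t₂ ≠ 0) (x₁ x₂ : Fin d → ℝ) :
    qf M (a • x₁ + b • x₂) / (a * t₁ + b * t₂) =
      a * (qf M x₁ / t₁) + b * (qf M x₂ / t₂) -
        a * b * t₁ * t₂ / (a * t₁ + b * t₂) * qf M (t₁⁻¹ • x₁ - t₂⁻¹ • x₂) := by
  rw [sub_eq_add_neg (t₁⁻¹ • x₁), ← neg_smul, qf_smul_add_smul, qf_smul_add_smul]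
  field_simp
  ring

lemma exists_pos_mul_sq_norm_le_qf {M : Matrix (Fin d) (Fin d) ℝ} (hM : M.PosDef) :
    ∃ c > 0, ∀ x, c * ‖x‖ ^ 2 ≤ qf M x := by
  have normalize_mem {x : Fin d → ℝ} (hx : x ≠ 0) : ‖x‖⁻¹ • x ∈ Metric.sphere 0 1 := by
    simpa using norm_smul_inv_norm (𝕜 := ℝ) hx
  rcases (Metric.sphere (0 : Fin d → ℝ) 1).eq_empty_or_nonempty with hempty | hne
  · refine ⟨1, one_pos, fun x => ?_⟩
    obtain rfl : x = 0 := by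
      by_contra hx
      simpa [hempty] using normalize_mem hx
    simp [qf]
  obtain ⟨u, hu, hmin⟩ :=
    (isCompact_sphere (0 : Fin d → ℝ) 1).exists_isMinOn hne (continuous_qf M).continuousOn
  refine ⟨qf M u, qf_pos hM (ne_zero_of_mem_unit_sphere ⟨u, hu⟩), fun x => ?_⟩
  rcases eq_or_ne x 0 with rfl | hx
  · simp [qf]
  have hle : qf M u ≤ ‖x‖⁻¹ ^ 2 * qf M x := qf_smul M _ x ▸ hmin (normalize_mem hx)
  have hnx : 0 < ‖x‖ := norm_pos_iff.mpr hx
  calc qf M u * ‖x‖ ^ 2 ≤ ‖x‖⁻¹ ^ 2 * qf M x * ‖x‖ ^ 2 := by gcongr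
    _ = qf M x := by field_simp

lemma tendsto_qf_cocompact {M : Matrix (Fin d) (Fin d) ℝ} (hM : M.PosDef) :
    Tendsto (qf M) (cocompact _) atTop := by
  obtain ⟨c, hc, hcq⟩ := exists_pos_mul_sq_norm_le_qf hM
  exact tendsto_atTop_mono hcq
    (((tendsto_pow_atTop two_ne_zero).comp tendsto_norm_cocompact_atTop).const_mul_atTop hc)

lemma exists_minimizes {S : Matrix (Fin d) (Fin d) ℝ} (hS : S.PosDef) (b : Fin d → ℝ) :
    ∃ x, Minimizes S b x := by
  have hfar : ∀ᶠ x in cocompact _ ⊓ 𝓟 (Ici b), qf S⁻¹ b ≤ qf S⁻¹ x :=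
    ((tendsto_qf_cocompact hS.inv).eventually_ge_atTop _).filter_mono inf_le_left
  obtain ⟨x, hx, hmin⟩ :=
    (continuous_qf S⁻¹).continuousOn.exists_isMinOn' isClosed_Ici (mem_Ici.mpr le_rfl) hfar
  exact ⟨x, hx, fun y hy => hmin hy⟩

end QuadraticForm

lemma exists_forall_le_of_continuousOn_Ioi {f : ℝ → ℝ} (hf : ContinuousOn f (Ioi 0))
    (hf₀ : Tendsto f (𝓝[>] 0) atTop) (hf_top : Tendsto f atTop atTop) :
    ∃ t₀ > 0, ∀ t > 0, f t₀ ≤ f t := by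
  have hcont : Continuous (f ∘ Real.exp) :=
    hf.comp_continuous Real.continuous_exp fun s => Real.exp_pos s
  have hlim : Tendsto (f ∘ Real.exp) (cocompact ℝ) atTop := by
    rw [cocompact_eq_atBot_atTop, tendsto_sup]
    exact ⟨hf₀.comp Real.tendsto_exp_atBot_nhdsGT, hf_top.comp Real.tendsto_exp_atTop⟩
  obtain ⟨s₀, hs₀⟩ := hcont.exists_forall_le hlim
  exact ⟨Real.exp s₀, Real.exp_pos s₀, fun t ht => by
    simpa [Real.exp_log ht] using hs₀ (Real.log t)⟩

lemma eq_zero_of_eventually_nonneg_mul_add_mul_sq {k e : ℝ}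
    (h : ∀ᶠ s in 𝓝 0, 0 ≤ k * s + e * s ^ 2) : k = 0 := by
  have hmin : IsLocalMin (fun s => k * s + e * s ^ 2) 0 := h.mono fun s hs => by simpa using hs
  have hderiv : HasDerivAt (fun s => k * s + e * s ^ 2) k 0 := by
    simpa using ((hasDerivAt_id 0).const_mul k).fun_add ((hasDerivAt_pow 2 0).const_mul e)
  exact hmin.hasDerivAt_eq_zero hderiv

section ValueFunction

variable {d : ℕ} {S : Matrix (Fin d) (Fin d) ℝ} {αv μv : Fin d → ℝ}

lemma gfun_eq_of_minimizes {t : ℝ} {x : Fin d → ℝ}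
    (hx : Minimizes S (fun i => αv i + μv i * t) x) : gfun S αv μv t = 1 / t * qf S⁻¹ x := by
  refine congrArg _ (IsLeast.csInf_eq ⟨mem_image_of_mem _ hx.1, ?_⟩)
  rintro _ ⟨y, hy, rfl⟩
  exact hx.2 y hy

lemma gfun_le (hS : S.PosDef) {t : ℝ} (ht : 0 < t) {x : Fin d → ℝ}
    (hx : (fun i => αv i + μv i * t) ≤ x) : gfun S αv μv t ≤ 1 / t * qf S⁻¹ x := by
  obtain ⟨y, hy⟩ := exists_minimizes hS (fun i => αv i + μv i * t)
  rw [gfun_eq_of_minimizes hy]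
  gcongr
  exact hy.2 x hx

lemma gfun_convex_combination_le (hS : S.PosDef) {t₁ t₂ a b : ℝ} (ht₁ : 0 < t₁) (ht₂ : 0 < t₂)
    (ha : 0 ≤ a) (hb : 0 ≤ b) (hab : a + b = 1) {x₁ x₂ : Fin d → ℝ}
    (hx₁ : Minimizes S (fun i => αv i + μv i * t₁) x₁)
    (hx₂ : Minimizes S (fun i => αv i + μv i * t₂) x₂) :
    gfun S αv μv (a * t₁ + b * t₂) ≤ a * gfun S αv μv t₁ + b * gfun S αv μv t₂ -
      a * b * t₁ * t₂ / (a * t₁ + b * t₂) * qf S⁻¹ (t₁⁻¹ • x₁ - t₂⁻¹ • x₂) := by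
  have ht : 0 < a * t₁ + b * t₂ := convex_Ioi (0 : ℝ) ht₁ ht₂ ha hb hab
  have hfeas : (fun i => αv i + μv i * (a * t₁ + b * t₂)) ≤ a • x₁ + b • x₂ := fun i => by
    have h₁ := mul_le_mul_of_nonneg_left (hx₁.1 i) ha
    have h₂ := mul_le_mul_of_nonneg_left (hx₂.1 i) hb
    simp only [Pi.add_apply, Pi.smul_apply, smul_eq_mul] at h₁ h₂ ⊢
    linear_combination h₁ + h₂ - αv i * hab
  calc gfun S αv μv (a * t₁ + b * t₂) ≤ 1 / (a * t₁ + b * t₂) * qf S⁻¹ (a • x₁ + b • x₂) :=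
        gfun_le hS ht hfeas
    _ = _ := by
      rw [one_div_mul_eq_div, qf_perspective _ ht₁.ne' ht₂.ne' ht.ne', gfun_eq_of_minimizes hx₁,
        gfun_eq_of_minimizes hx₂]
      ring

lemma convexOn_gfun (hS : S.PosDef) (αv μv : Fin d → ℝ) :
    ConvexOn ℝ (Ioi 0) (gfun S αv μv) := by
  refine ⟨convex_Ioi 0, fun t₁ ht₁ t₂ ht₂ a b ha hb hab => ?_⟩
  obtain ⟨x₁, hx₁⟩ := exists_minimizes hS (fun i => αv i + μv i * t₁)
  obtain ⟨x₂, hx₂⟩ := exists_minimizes hS (fun i => αv i + μv i * t₂)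
  have hdefect : 0 ≤ a * b * t₁ * t₂ / (a * t₁ + b * t₂) * qf S⁻¹ (t₁⁻¹ • x₁ - t₂⁻¹ • x₂) := by
    have ht : 0 < a * t₁ + b * t₂ := convex_Ioi (0 : ℝ) ht₁ ht₂ ha hb hab
    have hab₁₂ : 0 ≤ a * b * t₁ * t₂ :=
      mul_nonneg (mul_nonneg (mul_nonneg ha hb) (le_of_lt ht₁)) (le_of_lt ht₂)
    exact mul_nonneg (div_nonneg hab₁₂ ht.le) (qf_nonneg hS.inv.posSemidef _)
  simpa only [smul_eq_mul] using
    (gfun_convex_combination_le hS ht₁ ht₂ ha hb hab hx₁ hx₂).trans (sub_le_self _ hdefect)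

end ValueFunction

section Minimum

variable {d : ℕ} {S : Matrix (Fin d) (Fin d) ℝ} {αv μv : Fin d → ℝ}

lemma exists_pos_mul_sq_div_le_gfun (hS : S.PosDef) :
    ∃ c > 0, ∀ t > 0, ∀ i, 0 ≤ αv i + μv i * t →
      c * (αv i + μv i * t) ^ 2 / t ≤ gfun S αv μv t := by
  obtain ⟨c, hc, hcq⟩ := exists_pos_mul_sq_norm_le_qf hS.inv
  refine ⟨c, hc, fun t ht i hi => ?_⟩
  obtain ⟨x, hx⟩ := exists_minimizes hS (fun i => αv i + μv i * t)
  have hxi : αv i + μv i * t ≤ ‖x‖ :=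
    (hx.1 i).trans ((le_abs_self _).trans (norm_le_pi_norm x i))
  rw [gfun_eq_of_minimizes hx, one_div_mul_eq_div]
  gcongr
  exact (mul_le_mul_of_nonneg_left (pow_le_pow_left₀ hi hxi 2) hc.le).trans (hcq x)

lemma gfun_eq_mul_of_minimizes {t : ℝ} (ht : t ≠ 0) {y : Fin d → ℝ}
    (hy : Minimizes S (fun i => αv i + μv i * t) (t • y)) : gfun S αv μv t = t * qf S⁻¹ y := by
  rw [gfun_eq_of_minimizes hy, qf_smul]
  field_simp

lemma exists_isMin_gfun (hS : S.PosDef) (hd : 0 < d) (hα : ∀ i, 0 < αv i)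
    (hμ : ∀ i, 0 < μv i) :
    ∃ t₀, 0 < t₀ ∧ ∀ t, 0 < t → gfun S αv μv t₀ ≤ gfun S αv μv t := by
  obtain ⟨c, hc, hg⟩ := exists_pos_mul_sq_div_le_gfun (αv := αv) (μv := μv) hS
  obtain ⟨i⟩ : Nonempty (Fin d) := ⟨⟨0, hd⟩⟩
  have hαi := hα i
  have hμi := hμ i
  have h₀ : Tendsto (gfun S αv μv) (𝓝[>] 0) atTop := by
    refine tendsto_atTop_mono' _ (eventually_nhdsWithin_of_forall fun t (ht : 0 < t) => ?_)
      (tendsto_inv_nhdsGT_zero.const_mul_atTop (by positivity : 0 < c * αv i ^ 2))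
    calc c * αv i ^ 2 * t⁻¹ ≤ c * (αv i + μv i * t) ^ 2 / t := by
          rw [← div_eq_mul_inv]; gcongr; nlinarith [mul_pos hμi ht]
      _ ≤ gfun S αv μv t := hg t ht i (by positivity)
  have h_top : Tendsto (gfun S αv μv) atTop atTop := by
    refine tendsto_atTop_mono' _ ((eventually_gt_atTop 0).mono fun t ht => ?_)
      (tendsto_id.const_mul_atTop (by positivity : 0 < c * μv i ^ 2))
    calc c * μv i ^ 2 * id t = c * (μv i * t) ^ 2 / t := by rw [id]; field_simp
      _ ≤ c * (αv i + μv i * t) ^ 2 / t := by gcongr; nlinarith [mul_pos hμi ht]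
      _ ≤ gfun S αv μv t := hg t ht i (by positivity)
  exact exists_forall_le_of_continuousOn_Ioi
    ((convexOn_gfun hS αv μv).continuousOn isOpen_Ioi) h₀ h_top

lemma eq_of_isMin_gfun (hS : S.PosDef) (hd : 0 < d) (hα : ∀ i, 0 < αv i)
    (hμ : ∀ i, 0 < μv i) {t₀ t₁ : ℝ}
    (h₀ : 0 < t₀ ∧ ∀ t, 0 < t → gfun S αv μv t₀ ≤ gfun S αv μv t)
    (h₁ : 0 < t₁ ∧ ∀ t, 0 < t → gfun S αv μv t₁ ≤ gfun S αv μv t) : t₀ = t₁ := by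
  obtain ⟨ht₀, hmin₀⟩ := h₀
  obtain ⟨ht₁, hmin₁⟩ := h₁
  obtain ⟨x₀, hx₀⟩ := exists_minimizes hS (fun i => αv i + μv i * t₀)
  obtain ⟨x₁, hx₁⟩ := exists_minimizes hS (fun i => αv i + μv i * t₁)
  have hg : gfun S αv μv t₁ = gfun S αv μv t₀ := le_antisymm (hmin₁ t₀ ht₀) (hmin₀ t₁ ht₁)
  -- the midpoint is a minimiser too, which forces the defect of the perspective to vanish
  have hmid := (hmin₀ _ (by positivity)).trans <| gfun_convex_combination_le hS ht₀ ht₁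
    (a := 1 / 2) (b := 1 / 2) (by norm_num) (by norm_num) (by norm_num) hx₀ hx₁
  have hy : t₀⁻¹ • x₀ = t₁⁻¹ • x₁ := by
    by_contra hne
    have hq := qf_pos hS.inv (sub_ne_zero.mpr hne)
    have hcoef : 0 < 1 / 2 * (1 / 2) * t₀ * t₁ / (1 / 2 * t₀ + 1 / 2 * t₁) := by positivity
    rw [hg] at hmid
    linarith [mul_pos hcoef hq]
  obtain ⟨y, rfl, rfl⟩ : ∃ y, x₀ = t₀ • y ∧ x₁ = t₁ • y :=
    ⟨t₀⁻¹ • x₀, (smul_inv_smul₀ ht₀.ne' x₀).symm, by rw [hy, smul_inv_smul₀ ht₁.ne']⟩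
  have hy0 : y ≠ 0 := by
    obtain ⟨i⟩ : Nonempty (Fin d) := ⟨⟨0, hd⟩⟩
    rintro rfl
    have h := hx₀.1 i
    simp only [smul_zero, Pi.zero_apply] at h
    linarith [hα i, mul_pos (hμ i) ht₀]
  exact mul_right_cancel₀ (qf_pos hS.inv hy0).ne' <|
    (gfun_eq_mul_of_minimizes ht₀.ne' hx₀).symm.trans
      (hg.symm.trans (gfun_eq_mul_of_minimizes ht₁.ne' hx₁))

end Minimum

section EssentialIndexSet

variable {d : ℕ}

def zeroExtend (I : Finset (Fin d)) (x : ↥I → ℝ) : Fin d → ℝ :=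
  fun j => if h : j ∈ I then x ⟨j, h⟩ else 0

lemma dotProduct_zeroExtend (I : Finset (Fin d)) (v : Fin d → ℝ) (x : ↥I → ℝ) :
    v ⬝ᵥ zeroExtend I x = subv v I ⬝ᵥ x := by
  simp only [dotProduct, zeroExtend, subv, mul_dite, mul_zero, Finset.sum_attach_eq_sum_dite,
    Finset.univ_eq_attach]

lemma posDef_sub {S : Matrix (Fin d) (Fin d) ℝ} (hS : S.PosDef) (I : Finset (Fin d)) :
    (sub S I I).PosDef :=
  hS.submatrix Subtype.val_injective

lemma subQF_pos {S : Matrix (Fin d) (Fin d) ℝ} (hS : S.PosDef) {I : Finset (Fin d)}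
    {v : Fin d → ℝ} {i : Fin d} (hi : i ∈ I) (hv : v i ≠ 0) : 0 < subQF S I v := by
  have hne : subv v I ≠ 0 := fun h => hv (congrFun h ⟨i, hi⟩)
  simpa [subQF, wvec] using (posDef_sub hS I).inv.dotProduct_mulVec_pos hne

variable {S : Matrix (Fin d) (Fin d) ℝ} {b x : Fin d → ℝ} {I : Finset (Fin d)}

lemma mulVec_zeroExtend_wvec (hS : S.PosDef) (hI : ∀ i ∈ I, x i = b i)
    (hIc : ∀ j, j ∉ I → x j = rowdot S I b j) : S *ᵥ zeroExtend I (wvec S I b) = x := by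
  funext j
  change S j ⬝ᵥ zeroExtend I (wvec S I b) = x j
  rw [dotProduct_zeroExtend]
  by_cases hj : j ∈ I
  · have hdet : IsUnit (sub S I I).det := (posDef_sub hS I).det_pos.ne'.isUnit
    have hw : sub S I I *ᵥ wvec S I b = subv b I := by
      rw [wvec, mulVec_mulVec, mul_nonsing_inv _ hdet, one_mulVec]
    rw [hI j hj]
    exact congrFun hw ⟨j, hj⟩
  · exact (hIc j hj).symm

lemma dotProduct_inv_mulVec_eq (hS : S.PosDef) (hI : ∀ i ∈ I, x i = b i)
    (hIc : ∀ j, j ∉ I → x j = rowdot S I b j) (v : Fin d → ℝ) :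
    v ⬝ᵥ S⁻¹ *ᵥ x = subv v I ⬝ᵥ wvec S I b := by
  rw [← mulVec_zeroExtend_wvec hS hI hIc, mulVec_mulVec, nonsing_inv_mul _ hS.det_pos.ne'.isUnit,
    one_mulVec, dotProduct_zeroExtend]

lemma qf_inv_eq_subQF (hS : S.PosDef) (hI : ∀ i ∈ I, x i = b i)
    (hIc : ∀ j, j ∉ I → x j = rowdot S I b j) : qf S⁻¹ x = subQF S I b := by
  rw [qf, dotProduct_inv_mulVec_eq hS hI hIc, subQF]
  congr 1
  funext i
  exact hI i i.2

end EssentialIndexSet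

section Stationarity

variable {d : ℕ} {S : Matrix (Fin d) (Fin d) ℝ} {αv μv : Fin d → ℝ}

lemma qf_eq_of_isMin_gfun (hS : S.PosDef) {t₀ : ℝ} (ht₀ : 0 < t₀)
    (hmin : ∀ t, 0 < t → gfun S αv μv t₀ ≤ gfun S αv μv t) {x : Fin d → ℝ}
    (hx : Minimizes S (fun i => αv i + μv i * t₀) x) :
    qf S⁻¹ x = t₀ * (x ⬝ᵥ S⁻¹ *ᵥ μv + μv ⬝ᵥ S⁻¹ *ᵥ x) := by
  set C := x ⬝ᵥ S⁻¹ *ᵥ μv + μv ⬝ᵥ S⁻¹ *ᵥ x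
  have hnonneg : ∀ s ∈ Ioi (-t₀), 0 ≤ (t₀ * C - qf S⁻¹ x) * s + t₀ * qf S⁻¹ μv * s ^ 2 := by
    intro s (hs : -t₀ < s)
    have ht : 0 < t₀ + s := by linarith
    have hfeas : (fun i => αv i + μv i * (t₀ + s)) ≤ x + s • μv := fun i => by
      have := hx.1 i
      simp only [Pi.add_apply, Pi.smul_apply, smul_eq_mul] at this ⊢
      linarith
    have hexp : qf S⁻¹ (x + s • μv) = qf S⁻¹ x + s * C + s ^ 2 * qf S⁻¹ μv := by
      simpa using qf_smul_add_smul S⁻¹ 1 s x μv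
    have hle := (hmin _ ht).trans (gfun_le hS ht hfeas)
    rw [gfun_eq_of_minimizes hx, hexp, one_div_mul_eq_div, one_div_mul_eq_div,
      div_le_div_iff₀ ht₀ ht] at hle
    linarith
  have := eq_zero_of_eventually_nonneg_mul_add_mul_sq
    (eventually_of_mem (Ioi_mem_nhds (neg_lt_zero.mpr ht₀)) hnonneg)
  linarith

lemma subQF_eq_sq_mul_subQF (hS : S.PosDef) (I : Finset (Fin d)) {t₀ : ℝ}
    (h : subQF S I (fun i => αv i + μv i * t₀) =
      2 * t₀ * (subv μv I ⬝ᵥ wvec S I (fun i => αv i + μv i * t₀))) :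
    subQF S I αv = t₀ ^ 2 * subQF S I μv := by
  have hsym := dotProduct_mulVec_comm_of_isHermitian (posDef_sub hS I).inv.isHermitian
    (subv αv I) (subv μv I)
  have hb : subv (fun i => αv i + μv i * t₀) I = subv αv I + t₀ • subv μv I := by
    funext i
    simp only [subv, Pi.add_apply, Pi.smul_apply, smul_eq_mul]
    ring
  simp only [subQF, wvec, hb, mulVec_add, mulVec_smul, dotProduct_add, add_dotProduct,
    dotProduct_smul, smul_dotProduct, smul_eq_mul] at h ⊢
  linear_combination h - t₀ * hsym

lemma eq_sqrt_of_isMin_gfun (hS : S.PosDef) {t₀ : ℝ} (ht₀ : 0 < t₀)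
    (hmin : ∀ t, 0 < t → gfun S αv μv t₀ ≤ gfun S αv μv t) {x : Fin d → ℝ}
    (hx : Minimizes S (fun i => αv i + μv i * t₀) x) {I : Finset (Fin d)}
    (hI : ∀ i ∈ I, x i = αv i + μv i * t₀)
    (hIc : ∀ j, j ∉ I → x j = rowdot S I (fun i => αv i + μv i * t₀) j)
    {i : Fin d} (hi : i ∈ I) (hμ : μv i ≠ 0) :
    t₀ = √(subQF S I αv / subQF S I μv) := by
  have hstat := qf_eq_of_isMin_gfun hS ht₀ hmin hx
  rw [dotProduct_mulVec_comm_of_isHermitian hS.inv.isHermitian x μv,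
    dotProduct_inv_mulVec_eq hS hI hIc, qf_inv_eq_subQF hS hI hIc] at hstat
  rw [subQF_eq_sq_mul_subQF hS I (by rw [hstat]; ring),
    mul_div_cancel_right₀ _ (subQF_pos hS hi hμ).ne', Real.sqrt_sq ht₀.le]

end Stationarity

/-- Lemma 2.2 of Dȩbicki–Hashorva–Ji–Tabiś 2018:
for `Σ` positive definite and `α, μ` with positive components, the function
`g(t) = (1/t)·inf_{x ≥ α+μt} xᵀΣ⁻¹x` is convex on `(0,∞)` and attains its unique minimum
over `(0,∞)` at some `t₀ > 0`; if `I` is the essential index set of `P_Σ(α + μ t₀)`, then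
`t₀ = sqrt((α_IᵀΣ_{II}⁻¹α_I)/(μ_IᵀΣ_{II}⁻¹μ_I))` and
`inf g = g(t₀) = (1/t₀)·b_IᵀΣ_{II}⁻¹b_I` with `b = α + μ t₀`. -/
theorem stmt_1 {d : ℕ} (hd : 2 ≤ d) (S : Matrix (Fin d) (Fin d) ℝ) (hS : S.PosDef)
    (αv μv : Fin d → ℝ) (hα : ∀ i, 0 < αv i) (hμ : ∀ i, 0 < μv i) :
    ConvexOn ℝ (Set.Ioi (0 : ℝ)) (gfun S αv μv) ∧
    (∃! t₀ : ℝ, 0 < t₀ ∧ ∀ t : ℝ, 0 < t → gfun S αv μv t₀ ≤ gfun S αv μv t) ∧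
    ∀ t₀ : ℝ, (0 < t₀ ∧ ∀ t : ℝ, 0 < t → gfun S αv μv t₀ ≤ gfun S αv μv t) →
      ∀ btil : Fin d → ℝ, ∀ I : Finset (Fin d),
        Minimizes S (fun i => αv i + μv i * t₀) btil →
        EssIdx S (fun i => αv i + μv i * t₀) btil I →
          t₀ = Real.sqrt (subQF S I αv / subQF S I μv) ∧
          gfun S αv μv t₀ = (1 / t₀) * subQF S I (fun i => αv i + μv i * t₀) := by
  have hd₀ : 0 < d := by omega
  refine ⟨convexOn_gfun hS αv μv, ?_, fun t₀ ⟨ht₀, hmin⟩ btil I hx hE => ?_⟩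
  · obtain ⟨t₀, ht₀⟩ := exists_isMin_gfun hS hd₀ hα hμ
    exact ⟨t₀, ht₀, fun t₁ ht₁ => eq_of_isMin_gfun hS hd₀ hα hμ ht₁ ht₀⟩
  · obtain ⟨⟨i, hi⟩, hI, -, -, hIc, -⟩ := hE
    exact ⟨eq_sqrt_of_isMin_gfun hS ht₀ hmin hx hI hIc hi (hμ i).ne',
      by rw [gfun_eq_of_minimizes hx, qf_inv_eq_subQF hS hI hIc]⟩
end
end

section
/- For every fixed T > 0, the function r ↦ H_I(r,T) is continuous on the open interval (0,T). -/
open MeasureTheory ProbabilityTheory Filter Asymptotics Matrix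
open scoped ENNReal NNReal

noncomputable section

variable {Ω : Type*} [MeasureSpace Ω]

open Set Topology

/-!
Put `θ = t₀⁻¹ Σ_{II}⁻¹ b_I` and `Z(t) = (X(t) - μt)_I`, and let `ν` be the product of
`P` with Lebesgue measure on `ℝ^I` weighted by `exp(θ·x)`. Then `H_I(r,T)` is the
`ν`-measure of `{(x, ω) : L(x, ω) > r}`, where `L(x, ω)` is the time `Z(ω)` spends strictly
above `x` during `[0,T]`. This is antitone in `r`, and finite for `r > 0` by Markov's
inequality: by Tonelli, `∫ L dν = ∫₀ᵀ E[exp(θ·Z(t))] dt / ∏ θ_i`, a bounded Gaussian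
exponential moment. Continuity at `r ∈ (0,T)` then amounts to `ν{L = r} = 0`. For a fixed
continuous path, `x ↦ L(x)` is strictly decreasing along the strict componentwise order as
long as `0 < L < T`, because between a time above `y` and a time not above `x` the path spends
an open interval above `x` but not above `y`. So each section `{x : L(x, ω) = r}` is a weak
antichain, and such sets are Lebesgue-null: they lie in the frontier of an upper set.
-/

def sojourn {ι : Type*} (f : ℝ → ι → ℝ) (T : ℝ) (x : ι → ℝ) : ℝ≥0∞ :=
  volume {t ∈ Icc 0 T | StrongLT x (f t)}

theorem Antitone.continuousAt_of_tendsto_one_div {β : Type*} [LinearOrder β] [TopologicalSpace β]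
    [OrderTopology β] {G : ℝ → β} (hG : Antitone G) {x : ℝ}
    (hright : Tendsto (fun n : ℕ => G (x + 1 / (n + 1))) atTop (𝓝 (G x)))
    (hleft : Tendsto (fun n : ℕ => G (x - 1 / (n + 1))) atTop (𝓝 (G x))) :
    ContinuousAt G x := by
  refine tendsto_order.2 ⟨fun c hc => ?_, fun c hc => ?_⟩
  · obtain ⟨n, hn⟩ := (hright.eventually (eventually_gt_nhds hc)).exists
    filter_upwards [Iio_mem_nhds (lt_add_of_pos_right x Nat.one_div_pos_of_nat)] with r hr
    exact hn.trans_le (hG hr.le)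
  · obtain ⟨n, hn⟩ := (hleft.eventually (eventually_lt_nhds hc)).exists
    filter_upwards [Ioi_mem_nhds (sub_lt_self x Nat.one_div_pos_of_nat)] with r hr
    exact (hG hr.le).trans_lt hn

theorem continuousAt_measure_ofReal_lt {α : Type*} [MeasurableSpace α] {μ : Measure α}
    {F : α → ℝ≥0∞} (hF : Measurable F) {r₀ : ℝ} (hr₀ : 0 < r₀)
    (hfin : ∃ r < r₀, μ {a | ENNReal.ofReal r < F a} ≠ ∞)
    (hnull : μ {a | F a = ENNReal.ofReal r₀} = 0) :
    ContinuousAt (fun r => μ {a | ENNReal.ofReal r < F a}) r₀ := by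
  set S : ℝ → Set α := fun r => {a | ENNReal.ofReal r < F a}
  have hS : Antitone S := fun r r' h a ha => (ENNReal.ofReal_le_ofReal h).trans_lt ha
  refine Antitone.continuousAt_of_tendsto_one_div (fun r r' h => measure_mono (hS h)) ?_ ?_
  · have hunion : ⋃ n : ℕ, S (r₀ + 1 / (n + 1)) = S r₀ := by
      ext a
      simp only [S, mem_iUnion, mem_ofPred_eq]
      refine ⟨fun ⟨n, hn⟩ => (ENNReal.ofReal_le_ofReal ?_).trans_lt hn, fun ha => ?_⟩
      · exact le_add_of_nonneg_right Nat.one_div_pos_of_nat.le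
      obtain ⟨x, -, hx₀, hxF⟩ := ENNReal.lt_iff_exists_real_btwn.1 ha
      obtain ⟨n, hn⟩ :=
        exists_nat_one_div_lt (sub_pos.2 (ENNReal.ofReal_lt_ofReal_iff'.1 hx₀).1)
      exact ⟨n, (ENNReal.ofReal_le_ofReal (by linarith)).trans_lt hxF⟩
    rw [← hunion]
    exact tendsto_measure_iUnion_atTop fun n m h => hS (by gcongr)
  · have hinter : ⋂ n : ℕ, S (r₀ - 1 / (n + 1)) = {a | ENNReal.ofReal r₀ ≤ F a} := by
      ext a
      simp only [S, mem_iInter, mem_ofPred_eq]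
      refine ⟨fun h => ?_, fun ha n => ?_⟩
      · by_contra! hlt
        obtain ⟨x, -, hFx, hx₀⟩ := ENNReal.lt_iff_exists_real_btwn.1 hlt
        obtain ⟨n, hn⟩ :=
          exists_nat_one_div_lt (sub_pos.2 ((ENNReal.ofReal_lt_ofReal_iff hr₀).1 hx₀))
        exact (h n).not_ge (hFx.le.trans (ENNReal.ofReal_le_ofReal (by linarith)))
      · exact ((ENNReal.ofReal_lt_ofReal_iff hr₀).2
          (sub_lt_self r₀ Nat.one_div_pos_of_nat)).trans_le ha
    have hle : μ {a | ENNReal.ofReal r₀ ≤ F a} = μ (S r₀) := by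
      refine le_antisymm ?_ (measure_mono fun a (ha : _ < F a) => ha.le)
      calc μ {a | ENNReal.ofReal r₀ ≤ F a}
          ≤ μ (S r₀ ∪ {a | F a = ENNReal.ofReal r₀}) :=
            measure_mono fun a ha => (eq_or_lt_of_le ha).elim (fun h => Or.inr h.symm) Or.inl
        _ ≤ μ (S r₀) + μ {a | F a = ENNReal.ofReal r₀} := measure_union_le _ _
        _ = μ (S r₀) := by rw [hnull, add_zero]
    have hfin' : ∃ n : ℕ, μ (S (r₀ - 1 / (n + 1))) ≠ ∞ := by
      obtain ⟨r, hr, hr'⟩ := hfin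
      obtain ⟨n, hn⟩ := exists_nat_one_div_lt (sub_pos.2 hr)
      exact ⟨n, ne_top_of_le_ne_top hr' (measure_mono (hS (by linarith)))⟩
    rw [← hle, ← hinter]
    exact tendsto_measure_iInter_atTop
      (fun n => (measurableSet_lt measurable_const hF).nullMeasurableSet)
      (fun n m h => hS (by gcongr)) hfin'

section Orthant

variable {ι : Type*} [Fintype ι]

theorem IsWeakAntichain.volume_eq_zero [Nonempty ι] {s : Set (ι → ℝ)}
    (hs : IsWeakAntichain s) : volume s = 0 := by
  set U := {y : ι → ℝ | ∃ x ∈ s, StrongLT x y}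
  have hU : IsUpperSet U := fun _ _ hab ⟨x, hx, hxa⟩ => ⟨x, hx, hxa.trans_le hab⟩
  refine measure_mono_null (fun x hx => ?_) hU.null_frontier
  rw [← closure_sdiff_interior]
  refine ⟨?_, fun hxU => ?_⟩
  · have hlim : Tendsto (fun ε : ℝ => x + fun _ => ε) (𝓝[>] 0) (𝓝 x) :=
      ((continuous_const.add (continuous_pi fun _ => continuous_id)).tendsto' 0 x
        (by ext; simp)).mono_left nhdsWithin_le_nhds
    exact mem_closure_of_tendsto hlim (eventually_nhdsWithin_of_forall fun ε hε =>
      ⟨x, hx, fun i => lt_add_of_pos_right (x i) hε⟩)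
  · obtain ⟨y, hy, hyx⟩ := interior_subset hxU
    exact (hyx (Classical.arbitrary ι)).ne (congrFun (hs.eq hy hx hyx) _)

open Finset in
theorem sojourn_lt_sojourn [Nonempty ι] {f : ℝ → ι → ℝ}
    (hf : Continuous f) {T : ℝ} {x y : ι → ℝ} (hxy : StrongLT x y) (hy : sojourn f T y ≠ 0)
    (hx : sojourn f T x < ENNReal.ofReal T) : sojourn f T y < sojourn f T x := by
  set h : ℝ → ℝ := fun t => univ.inf' univ_nonempty fun i => f t i - x i
  set δ := univ.inf' univ_nonempty fun i => y i - x i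
  have hδ : 0 < δ := (lt_inf'_iff _).2 fun i _ => sub_pos.2 (hxy i)
  have hh : Continuous h := Continuous.finset_inf'_apply _ fun i _ =>
    ((continuous_apply i).comp hf).sub continuous_const
  have hT : 0 < T := ENNReal.ofReal_pos.1 (pos_of_gt hx)
  obtain ⟨s₁, hs₁, hs₁y⟩ := nonempty_of_measure_ne_zero hy
  obtain ⟨s₂, hs₂, hs₂x⟩ : ∃ s ∈ Icc 0 T, ¬ StrongLT x (f s) := by
    by_contra! hall
    have hIcc : volume (Icc 0 T) ≤ sojourn f T x := measure_mono fun t ht => ⟨ht, hall t ht⟩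
    rw [Real.volume_Icc, sub_zero] at hIcc
    exact hx.not_ge hIcc
  have h₁ : δ < h s₁ := (lt_inf'_iff _).2 fun i _ =>
    (inf'_le _ (mem_univ i)).trans_lt (sub_lt_sub_right (hs₁y i) _)
  have h₂ : h s₂ ≤ 0 := by
    obtain ⟨i, hi⟩ := not_forall.1 hs₂x
    exact (inf'_le _ (mem_univ i)).trans (sub_nonpos.2 (not_lt.1 hi))
  obtain ⟨t, ht, hht⟩ : δ / 2 ∈ h '' uIcc s₁ s₂ :=
    intermediate_value_uIcc hh.continuousOn (mem_uIcc.2 (Or.inr ⟨by linarith, by linarith⟩))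
  have htT : t ∈ closure (Ioo 0 T) := (closure_Ioo hT.ne).symm ▸ uIcc_subset_Icc hs₁ hs₂ ht
  set O := h ⁻¹' Ioo 0 δ ∩ Ioo 0 T
  have hOo : IsOpen O := (isOpen_Ioo.preimage hh).inter isOpen_Ioo
  have hOne : O.Nonempty := mem_closure_iff.1 htT _ (isOpen_Ioo.preimage hh)
    (show h t ∈ Ioo 0 δ by rw [hht]; constructor <;> linarith)
  have hOx : O ⊆ {t ∈ Icc 0 T | StrongLT x (f t)} := fun t ht =>
    ⟨Ioo_subset_Icc_self ht.2, fun i => sub_pos.1 ((lt_inf'_iff _).1 ht.1.1 i (mem_univ i))⟩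
  have hOy : Disjoint {t ∈ Icc 0 T | StrongLT y (f t)} O := by
    refine disjoint_left.2 fun t ht htO => ?_
    obtain ⟨i, -, hi⟩ := (inf'_lt_iff _).1 htO.1.2
    exact (hi.trans_le (inf'_le _ (mem_univ i))).not_ge (sub_le_sub_right (ht.2 i).le _)
  have hyx : {t ∈ Icc 0 T | StrongLT y (f t)} ⊆ {t ∈ Icc 0 T | StrongLT x (f t)} :=
    fun t ht => ⟨ht.1, fun i => (hxy i).trans (ht.2 i)⟩
  have hy_fin : sojourn f T y ≠ ⊤ :=
    ((measure_mono (sep_subset _ _)).trans_lt measure_Icc_lt_top).ne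
  calc sojourn f T y < sojourn f T y + volume O :=
        ENNReal.lt_add_right hy_fin (hOo.measure_pos volume hOne).ne'
    _ = volume ({t ∈ Icc 0 T | StrongLT y (f t)} ∪ O) :=
        (measure_union hOy hOo.measurableSet).symm
    _ ≤ sojourn f T x := measure_mono (union_subset hyx hOx)

theorem isWeakAntichain_sojourn_eq [Nonempty ι] {f : ℝ → ι → ℝ}
    (hf : Continuous f) {r T : ℝ} (hr : 0 < r) (hrT : r < T) :
    IsWeakAntichain {x | sojourn f T x = ENNReal.ofReal r} := fun x hx y hy _ hxy =>
  (sojourn_lt_sojourn hf hxy (by rw [hy]; simpa using hr)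
    (by rw [hx]; exact (ENNReal.ofReal_lt_ofReal_iff (hr.trans hrT)).2 hrT)).ne (hy.trans hx.symm)

def expWeightedVolume (θ : ι → ℝ) : Measure (ι → ℝ) :=
  volume.withDensity fun x => ENNReal.ofReal (Real.exp (θ ⬝ᵥ x))

instance (θ : ι → ℝ) : SFinite (expWeightedVolume θ) := by
  unfold expWeightedVolume; infer_instance

theorem measurableSet_strongLT {α : Type*} [MeasurableSpace α] {f g : α → ι → ℝ}
    (hf : Measurable f) (hg : Measurable g) : MeasurableSet {a | StrongLT (f a) (g a)} := by
  simp only [StrongLT, ofPred_forall]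
  exact .iInter fun i => measurableSet_lt (hf.eval (a := i)) (hg.eval (a := i))

theorem expWeightedVolume_strongLT {θ : ι → ℝ} (hθ : StrongLT 0 θ) (c : ι → ℝ) :
    expWeightedVolume θ {x | StrongLT x c}
      = ENNReal.ofReal (∏ i, θ i)⁻¹ * ENNReal.ofReal (Real.exp (θ ⬝ᵥ c)) := by
  have hset : {x : ι → ℝ | StrongLT x c} = univ.pi fun i => Iio (c i) := by
    ext x; simp [StrongLT]
  have hint : ∀ i, Integrable (fun y => Real.exp (θ i * y)) (volume.restrict (Iio (c i))) :=
    fun i => (integrableOn_exp_mul_Iic (hθ i) (c i)).mono_set Iio_subset_Iic_self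
  rw [expWeightedVolume,
    withDensity_apply _ (hset ▸ MeasurableSet.univ_pi fun _ => measurableSet_Iio), hset,
    volume_pi, Measure.restrict_pi_pi]
  simp_rw [dotProduct, Real.exp_sum]
  rw [← ofReal_integral_eq_lintegral_ofReal (Integrable.fintype_prod hint)
    (ae_of_all _ fun _ => by positivity),
    integral_fintype_prod_eq_prod fun i y => Real.exp (θ i * y),
    ← ENNReal.ofReal_mul (inv_nonneg.2 (Finset.prod_nonneg fun i _ => (hθ i).le)),
    inv_mul_eq_div, ← Finset.prod_div_distrib]
  congr 2 with i
  rw [setIntegral_congr_set Iio_ae_eq_Iic, integral_exp_mul_Iic (hθ i)]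

end Orthant

section BrownianMotion

variable {d : ℕ} {B : ℝ → Ω → Fin d → ℝ}

theorem IsStdBM.map_eq_gaussianReal {W : ℝ → Ω → ℝ} (hW : IsStdBM W) {t : ℝ}
    (ht : 0 ≤ t) :
    Measure.map (W t) volume = gaussianReal 0 t.toNNReal := by
  simpa [hW.1] using hW.2.2.2.1 0 t le_rfl ht

theorem lintegral_exp_mul_of_map_eq_gaussianReal {α : Type*} [MeasurableSpace α]
    {P : Measure α} {Y : α → ℝ} (hY : Measurable Y) {v : ℝ≥0}
    (hlaw : P.map Y = gaussianReal 0 v) (c : ℝ) :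
    ∫⁻ a, ENNReal.ofReal (Real.exp (c * Y a)) ∂P
      = ENNReal.ofReal (Real.exp (v * c ^ 2 / 2)) := by
  rw [← lintegral_map (f := fun y => ENNReal.ofReal (Real.exp (c * y))) (by fun_prop) hY, hlaw,
    ← ofReal_integral_eq_lintegral_ofReal (integrable_exp_mul_gaussianReal c)
      (ae_of_all _ fun _ => (Real.exp_pos _).le)]
  change ENNReal.ofReal (mgf id (gaussianReal 0 v) c) = _
  simp [mgf_id_gaussianReal]

theorem IsStdBMd.continuous (hB : IsStdBMd d B) (ω : Ω) :
    Continuous fun t => B t ω :=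
  continuous_pi fun i => (hB.1 i).2.1 ω

theorem IsStdBMd.measurable (hB : IsStdBMd d B) (t : ℝ) :
    Measurable (B t) :=
  measurable_pi_iff.2 fun i => (hB.1 i).2.2.1 t

theorem IsStdBMd.lintegral_exp_dotProduct (hB : IsStdBMd d B) (c : Fin d → ℝ) {t : ℝ}
    (ht : 0 ≤ t) :
    ∫⁻ ω, ENNReal.ofReal (Real.exp (c ⬝ᵥ B t ω))
      = ENNReal.ofReal (Real.exp (∑ j, t * c j ^ 2 / 2)) := by
  have hindep : iIndepFun (fun j ω => ENNReal.ofReal (Real.exp (c j * B t ω j))) volume :=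
    hB.2.comp (fun j (w : ℝ → ℝ) => ENNReal.ofReal (Real.exp (c j * w t))) fun _ => by
      fun_prop
  simp_rw [dotProduct, Real.exp_sum, ENNReal.ofReal_prod_of_nonneg fun j _ => (Real.exp_pos _).le]
  rw [lintegral_prod_eq_prod_lintegral_of_indepFun _ _ hindep fun j =>
    (((hB.1 j).2.2.1 t).const_mul (c j)).exp.ennreal_ofReal]
  refine Finset.prod_congr rfl fun j _ => ?_
  rw [lintegral_exp_mul_of_map_eq_gaussianReal ((hB.1 j).2.2.1 t)
    ((hB.1 j).map_eq_gaussianReal ht), Real.coe_toNNReal t ht]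

theorem IsStdBMd.lintegral_exp_dotProduct_sub_drift_le (hB : IsStdBMd d B) {ι : Type*}
    [Fintype ι] (M : Matrix ι (Fin d) ℝ) {θ m : ι → ℝ}
    (hθm : 0 ≤ θ ⬝ᵥ m) {t T : ℝ} (ht : t ∈ Icc 0 T) :
    ∫⁻ ω, ENNReal.ofReal (Real.exp (θ ⬝ᵥ (M *ᵥ B t ω - t • m)))
      ≤ ENNReal.ofReal (Real.exp (∑ j, T * (θ ᵥ* M) j ^ 2 / 2)) := by
  calc ∫⁻ ω, ENNReal.ofReal (Real.exp (θ ⬝ᵥ (M *ᵥ B t ω - t • m)))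
      ≤ ∫⁻ ω, ENNReal.ofReal (Real.exp (θ ᵥ* M ⬝ᵥ B t ω)) := by
        refine lintegral_mono fun ω => ENNReal.ofReal_le_ofReal (Real.exp_le_exp.2 ?_)
        rw [dotProduct_sub, dotProduct_mulVec, dotProduct_smul, smul_eq_mul]
        exact sub_le_self _ (mul_nonneg ht.1 hθm)
    _ = ENNReal.ofReal (Real.exp (∑ j, t * (θ ᵥ* M) j ^ 2 / 2)) :=
        hB.lintegral_exp_dotProduct _ ht.1
    _ ≤ _ := by gcongr; exact ht.2

end BrownianMotion

section Sojourn

variable {ι : Type*} [Fintype ι] {Z : ℝ → Ω → ι → ℝ} {T : ℝ}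

def sojournSet (Z : ℝ → Ω → ι → ℝ) (T : ℝ) : Set (((ι → ℝ) × Ω) × ℝ) :=
  {q | q.2 ∈ Icc 0 T ∧ StrongLT q.1.1 (Z q.2 q.1.2)}

theorem measurableSet_sojournSet (hZc : ∀ ω, Continuous fun t => Z t ω)
    (hZm : ∀ t, Measurable (Z t)) : MeasurableSet (sojournSet Z T) := by
  have hZ : Measurable fun q : ((ι → ℝ) × Ω) × ℝ => Z q.2 q.1.2 :=
    (measurable_uncurry_of_continuous_of_measurable hZc hZm).comp
      (measurable_snd.prodMk measurable_fst.snd)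
  exact (measurableSet_Icc.preimage measurable_snd).inter
    (measurableSet_strongLT measurable_fst.fst hZ)

theorem measurable_sojourn (hZc : ∀ ω, Continuous fun t => Z t ω)
    (hZm : ∀ t, Measurable (Z t)) :
    Measurable fun p : (ι → ℝ) × Ω => sojourn (fun t => Z t p.2) T p.1 :=
  measurable_measure_prodMk_left (measurableSet_sojournSet hZc hZm)

variable [SFinite (volume : Measure Ω)]

theorem lintegral_sojourn_eq_setLIntegral (hZc : ∀ ω, Continuous fun t => Z t ω)
    (hZm : ∀ t, Measurable (Z t)) (θ : ι → ℝ) :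
    ∫⁻ p, sojourn (fun t => Z t p.2) T p.1 ∂(expWeightedVolume θ).prod volume
      = ∫⁻ t in Icc 0 T, (expWeightedVolume θ).prod volume {p | StrongLT p.1 (Z t p.2)} := by
  have hE := measurableSet_sojournSet (T := T) hZc hZm
  rw [← lintegral_indicator measurableSet_Icc]
  refine (Measure.prod_apply hE).symm.trans ((Measure.prod_apply_symm hE).trans ?_)
  congr with t
  by_cases ht : t ∈ Icc 0 T
  · rw [indicator_of_mem ht]
    congr with p
    exact and_iff_right ht
  · rw [indicator_of_notMem ht]
    exact measure_mono_null (fun p hp => ht hp.1) measure_empty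

theorem expWeightedVolume_prod_strongLT {θ : ι → ℝ} (hθ : StrongLT 0 θ)
    (hZm : ∀ t, Measurable (Z t)) (t : ℝ) :
    (expWeightedVolume θ).prod volume {p | StrongLT p.1 (Z t p.2)}
      = ENNReal.ofReal (∏ i, θ i)⁻¹ *
          ∫⁻ ω, ENNReal.ofReal (Real.exp (θ ⬝ᵥ Z t ω)) := by
  rw [Measure.prod_apply_symm (measurableSet_strongLT (g := fun p : (ι → ℝ) × Ω => Z t p.2)
      measurable_fst ((hZm t).comp measurable_snd)),
    ← lintegral_const_mul' _ _ ENNReal.ofReal_ne_top]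
  exact lintegral_congr fun ω => expWeightedVolume_strongLT hθ (Z t ω)

theorem measure_ofReal_lt_sojourn_ne_top (hZc : ∀ ω, Continuous fun t => Z t ω)
    (hZm : ∀ t, Measurable (Z t)) {θ : ι → ℝ} (hθ : StrongLT 0 θ) {K : ℝ}
    (hmom : ∀ t ∈ Icc 0 T,
      ∫⁻ ω, ENNReal.ofReal (Real.exp (θ ⬝ᵥ Z t ω)) ≤ ENNReal.ofReal K)
    {r : ℝ} (hr : 0 < r) :
    (expWeightedVolume θ).prod volume
      {p | ENNReal.ofReal r < sojourn (fun t => Z t p.2) T p.1} ≠ ∞ := by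
  have hint :
      ∫⁻ p, sojourn (fun t => Z t p.2) T p.1 ∂(expWeightedVolume θ).prod volume ≠ ∞ := by
    refine ne_top_of_le_ne_top
      (b := ∫⁻ _ in Icc 0 T, ENNReal.ofReal (∏ i, θ i)⁻¹ * ENNReal.ofReal K) ?_ ?_
    · simp [ENNReal.mul_eq_top]
    rw [lintegral_sojourn_eq_setLIntegral hZc hZm]
    refine setLIntegral_mono' measurableSet_Icc fun t ht => ?_
    rw [expWeightedVolume_prod_strongLT hθ hZm]
    gcongr
    exact hmom t ht
  have hmarkov := meas_ge_le_lintegral_div (μ := (expWeightedVolume θ).prod volume)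
    (measurable_sojourn (T := T) hZc hZm).aemeasurable (ENNReal.ofReal_pos.2 hr).ne'
    ENNReal.ofReal_ne_top
  exact ne_top_of_le_ne_top (ENNReal.div_ne_top hint (ENNReal.ofReal_pos.2 hr).ne')
    ((measure_mono fun p (hp : ENNReal.ofReal r < _) => hp.le).trans hmarkov)

theorem measure_sojourn_eq_ofReal_eq_zero [Nonempty ι] (hZc : ∀ ω, Continuous fun t => Z t ω)
    (hZm : ∀ t, Measurable (Z t)) (θ : ι → ℝ) {r : ℝ} (hr : 0 < r) (hrT : r < T) :
    (expWeightedVolume θ).prod volume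
      {p | sojourn (fun t => Z t p.2) T p.1 = ENNReal.ofReal r} = 0 := by
  have hE : MeasurableSet
      {p : (ι → ℝ) × Ω | sojourn (fun t => Z t p.2) T p.1 = ENNReal.ofReal r} :=
    measurable_sojourn hZc hZm (measurableSet_singleton _)
  rw [Measure.prod_apply_symm hE]
  refine (lintegral_congr fun ω => ?_).trans lintegral_zero
  exact withDensity_absolutelyContinuous _ _
    (isWeakAntichain_sojourn_eq (hZc ω) hr hrT).volume_eq_zero

theorem lintegral_exp_mul_measure_ofReal_lt_sojourn_eq_prod
    (hZc : ∀ ω, Continuous fun t => Z t ω) (hZm : ∀ t, Measurable (Z t)) (θ : ι → ℝ)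
    (r : ℝ) :
    ∫⁻ x, ENNReal.ofReal (Real.exp (θ ⬝ᵥ x)) *
        volume {ω | ENNReal.ofReal r < sojourn (fun t => Z t ω) T x}
      = (expWeightedVolume θ).prod volume
          {p | ENNReal.ofReal r < sojourn (fun t => Z t p.2) T p.1} := by
  have hE : MeasurableSet
      {p : (ι → ℝ) × Ω | ENNReal.ofReal r < sojourn (fun t => Z t p.2) T p.1} :=
    measurableSet_lt measurable_const (measurable_sojourn hZc hZm)
  rw [Measure.prod_apply hE, expWeightedVolume,
    lintegral_withDensity_eq_lintegral_mul _ (by fun_prop) (measurable_measure_prodMk_left hE)]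
  rfl

theorem continuousOn_toReal_lintegral_exp_mul_measure_ofReal_lt_sojourn [Nonempty ι]
    (hZc : ∀ ω, Continuous fun t => Z t ω) (hZm : ∀ t, Measurable (Z t)) {θ : ι → ℝ}
    (hθ : StrongLT 0 θ) {K : ℝ}
    (hmom : ∀ t ∈ Icc 0 T,
      ∫⁻ ω, ENNReal.ofReal (Real.exp (θ ⬝ᵥ Z t ω)) ≤ ENNReal.ofReal K) :
    ContinuousOn (fun r => (∫⁻ x, ENNReal.ofReal (Real.exp (θ ⬝ᵥ x)) *
        volume {ω | ENNReal.ofReal r < sojourn (fun t => Z t ω) T x}).toReal) (Ioo 0 T) := by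
  intro r hr
  simp_rw [lintegral_exp_mul_measure_ofReal_lt_sojourn_eq_prod hZc hZm]
  have hfin := fun r (hr : 0 < r) => measure_ofReal_lt_sojourn_ne_top hZc hZm hθ hmom hr
  refine (ContinuousAt.comp (g := ENNReal.toReal) ?_ (continuousAt_measure_ofReal_lt
    (measurable_sojourn hZc hZm) hr.1 ⟨r / 2, half_lt_self hr.1, hfin _ (half_pos hr.1)⟩
    (measure_sojourn_eq_ofReal_eq_zero hZc hZm θ hr.1 hr.2))).continuousWithinAt
  exact ENNReal.continuousAt_toReal (hfin r hr.1)

end Sojourn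

theorem stmt_9_general {Ω : Type*} [MeasureSpace Ω]
    [IsProbabilityMeasure (volume : Measure Ω)] {d : ℕ}
    (B : ℝ → Ω → Fin d → ℝ) (hB : IsStdBMd d B)
    (A : Matrix (Fin d) (Fin d) ℝ)
    (X : ℝ → Ω → Fin d → ℝ) (hX : ∀ t ω, X t ω = A.mulVec (B t ω))
    (S : Matrix (Fin d) (Fin d) ℝ)
    (μv : Fin d → ℝ) (hμ : ∀ i, 0 < μv i)
    (t₀ : ℝ) (ht₀ : 0 < t₀)
    (b : Fin d → ℝ)
    (btil : Fin d → ℝ)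
    (I : Finset (Fin d)) (hI : EssIdx S b btil I)
    (T : ℝ) :
    ContinuousOn (fun r => HIrT X μv S I b t₀ r T) (Set.Ioo 0 T) := by
  have : Nonempty I := hI.1.to_subtype
  set M : Matrix I (Fin d) ℝ := A.submatrix Subtype.val id
  set θ : I → ℝ := (1 / t₀) • wvec S I b
  set Z : ℝ → Ω → I → ℝ := fun t ω => M *ᵥ B t ω - t • subv μv I
  have hθ : StrongLT 0 θ := fun i => mul_pos (one_div_pos.2 ht₀) (hI.2.2.2.1 i)
  have hθμ : 0 ≤ θ ⬝ᵥ subv μv I :=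
    Finset.sum_nonneg fun i _ => (mul_pos (hθ i) (hμ i)).le
  have hZc : ∀ ω, Continuous fun t => Z t ω := fun ω =>
    (continuous_const.matrix_mulVec (hB.continuous ω)).sub (continuous_id.smul continuous_const)
  have hZm : ∀ t, Measurable (Z t) := fun t =>
    ((continuous_const.matrix_mulVec continuous_id).measurable.comp (hB.measurable t)).sub_const _
  have hH : (fun r => HIrT X μv S I b t₀ r T) = fun r =>
      (∫⁻ x, ENNReal.ofReal (Real.exp (θ ⬝ᵥ x)) *
        volume {ω | ENNReal.ofReal r < sojourn (fun t => Z t ω) T x}).toReal := by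
    have hZX : ∀ t ω (i : I), Z t ω i = X t ω i - μv i * t := fun t ω i => by
      simp [Z, M, hX, mulVec, dotProduct, subv, mul_comm]
    have hexp : ∀ x : I → ℝ, 1 / t₀ * (x ⬝ᵥ wvec S I b) = θ ⬝ᵥ x := fun x => by
      rw [dotProduct_comm, smul_dotProduct, smul_eq_mul]
    simp only [HIrT, HIL, sojI, sojourn, StrongLT, hZX, hexp, mem_Icc, and_assoc]
  rw [hH]
  exact continuousOn_toReal_lintegral_exp_mul_measure_ofReal_lt_sojourn hZc hZm hθ
    fun t ht => hB.lintegral_exp_dotProduct_sub_drift_le M hθμ ht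

/-- Step II of the proof of Lemma 5.2: for every fixed `T > 0`, the
function `r ↦ H_I(r,T)` is continuous on `(0,T)`. -/
theorem stmt_9 {Ω : Type*} [MeasureSpace Ω]
    [IsProbabilityMeasure (volume : Measure Ω)] {d : ℕ} (hd : 2 ≤ d)
    (B : ℝ → Ω → Fin d → ℝ) (hB : IsStdBMd d B)
    (A : Matrix (Fin d) (Fin d) ℝ) (hA : IsUnit A.det)
    (X : ℝ → Ω → Fin d → ℝ) (hX : ∀ t ω, X t ω = A.mulVec (B t ω))
    (S : Matrix (Fin d) (Fin d) ℝ) (hS : S = A * A.transpose)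
    (αv μv : Fin d → ℝ) (hα : ∀ i, 0 < αv i) (hμ : ∀ i, 0 < μv i)
    (t₀ : ℝ) (ht₀ : 0 < t₀)
    (hmin : ∀ t : ℝ, 0 < t → gfun S αv μv t₀ ≤ gfun S αv μv t)
    (huniq : ∀ t : ℝ, 0 < t → gfun S αv μv t = gfun S αv μv t₀ → t = t₀)
    (b : Fin d → ℝ) (hb : b = fun i => αv i + μv i * t₀)
    (btil : Fin d → ℝ) (hbtil : Minimizes S b btil)
    (I : Finset (Fin d)) (hI : EssIdx S b btil I)
    (T : ℝ) (hT : 0 < T) :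
    ContinuousOn (fun r => HIrT X μv S I b t₀ r T) (Set.Ioo 0 T) :=
  stmt_9_general B hB A X hX S μv hμ t₀ ht₀ b btil I hI T
end
end
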